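/- arXiv:2302.10160 — 3 statements merged into one kernel-verified Lean document; each statement's English description precedes it below -/
import Mathlib

section
/- Let $\{\mathbf{y}_\lambda\}_{\lambda\in\Lambda}$ be a finite collection of vectors in $\mathbb{R}^n$ and $\mathbf{y}^\star, \tilde{\mathbf{y}}\in\mathbb{R}^n$. Let $\hat\lambda$ minimize $\|\mathbf{y}_\lambda-\tilde{\mathbf{y}}\|_2^2$ over $\lambda\in\Lambda$, and let $U=\sup_{\lambda,\lambda'\in\Lambda}\langle(\mathbf{y}_\lambda-\mathbf{y}_{\lambda'})/\|\mathbf{y}_\lambda-\mathbf{y}_{\lambda'}\|_2,\,\tilde{\mathbf{y}}-\mathbf{y}^\star\rangle$ (with the convention $\mathbf{0}/0=\mathbf{0}$). Then for every $\gamma>0$ and every $\lambda\in\Lambda$, $\|\mathbf{y}_{\hat\lambda}-\mathbf{y}^\star\|_2^2 \le (1+\gamma)\|\mathbf{y}_\lambda-\mathbf{y}^\star\|_2^2 + 4(1+\gamma^{-1})U^2$. -/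
open scoped RealInnerProductSpace

/-- Deterministic oracle inequality for pseudo-label based model selection. -/
theorem pseudo_label_oracle_inequality {n : ℕ} {Λ : Type*} [Fintype Λ] [Nonempty Λ]
    (y : Λ → EuclideanSpace ℝ (Fin n)) (ystar ytil : EuclideanSpace ℝ (Fin n))
    (lhat : Λ) (hmin : ∀ l : Λ, ‖y lhat - ytil‖ ^ 2 ≤ ‖y l - ytil‖ ^ 2)
    (U : ℝ)
    (hU : U = ⨆ p : Λ × Λ, ⟪(‖y p.1 - y p.2‖⁻¹) • (y p.1 - y p.2), ytil - ystar⟫)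
    (γ : ℝ) (hγ : 0 < γ) (l : Λ) :
    ‖y lhat - ystar‖ ^ 2 ≤ (1 + γ) * ‖y l - ystar‖ ^ 2 + 4 * (1 + γ⁻¹) * U ^ 2 := by
  set a := y lhat with ha
  set b := y l with hb
  set c := ystar with hc
  set t := ytil with ht
  have hbdd : BddAbove (Set.range fun p : Λ × Λ =>
      ⟪(‖y p.1 - y p.2‖⁻¹) • (y p.1 - y p.2), t - c⟫) := (Set.finite_range _).bddAbove
  have hU0 : 0 ≤ U := by
    rw [hU]
    have h0 := le_ciSup hbdd (l, l)
    simpa using h0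
  have hineq : ⟪a - b, t - c⟫ ≤ ‖a - b‖ * U := by
    rcases eq_or_ne a b with h | h
    · simp [h]
    · have hpos : 0 < ‖a - b‖ := by rwa [norm_pos_iff, sub_ne_zero]
      have hle := le_ciSup hbdd (lhat, l)
      rw [← hU] at hle
      have h2 : ‖a - b‖⁻¹ * ⟪a - b, t - c⟫ ≤ U := by
        rw [real_inner_smul_left] at hle
        exact hle
      calc ⟪a - b, t - c⟫ = ‖a - b‖ * (‖a - b‖⁻¹ * ⟪a - b, t - c⟫) := by
            field_simp
        _ ≤ ‖a - b‖ * U := mul_le_mul_of_nonneg_left h2 hpos.le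
  have key : ‖a - c‖ ^ 2 ≤ ‖b - c‖ ^ 2 + 2 * ⟪a - b, t - c⟫ := by
    have h := hmin l
    rw [norm_sub_sq_real a t, norm_sub_sq_real b t] at h
    rw [norm_sub_sq_real a c, norm_sub_sq_real b c]
    simp only [inner_sub_left, inner_sub_right] at *
    linarith
  set A := ‖a - c‖ with hA'
  set B := ‖b - c‖ with hB'
  have hA : 0 ≤ A := norm_nonneg _
  have hB : 0 ≤ B := norm_nonneg _
  have htri : ‖a - b‖ ≤ A + B := by
    calc ‖a - b‖ = ‖(a - c) - (b - c)‖ := by rw [sub_sub_sub_cancel_right]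
      _ ≤ A + B := norm_sub_le _ _
  have key2 : A ^ 2 ≤ B ^ 2 + 2 * ((A + B) * U) := by
    have h2 : ⟪a - b, t - c⟫ ≤ (A + B) * U :=
      le_trans hineq (mul_le_mul_of_nonneg_right htri hU0)
    linarith
  have hAB : A ≤ B + 2 * U := by
    by_contra hcon
    push_neg at hcon
    nlinarith [mul_nonneg hB hU0, mul_nonneg hA hU0]
  have hinv : γ * γ⁻¹ = 1 := mul_inv_cancel₀ hγ.ne'
  have hinvpos : 0 < γ⁻¹ := inv_pos.mpr hγ
  nlinarith [sq_nonneg (γ * B - 2 * U), mul_le_mul hAB hAB hA (by linarith),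
    mul_pos hγ hinvpos, sq_nonneg (B + 2 * U)]
end

section
/- Let $\mathbf{y}_1,\dots,\mathbf{y}_m,\mathbf{y}^\star,\tilde{\mathbf{y}}\in\mathbb{R}^n$ and suppose $\hat{j}$ minimizes $\|\mathbf{y}_j-\tilde{\mathbf{y}}\|_2^2$ over $j\in[m]$. Define $U=\max_{j,j'\in[m]}\langle(\mathbf{y}_j-\mathbf{y}_{j'})/\|\mathbf{y}_j-\mathbf{y}_{j'}\|_2,\tilde{\mathbf{y}}-\mathbf{y}^\star\rangle$ (convention $\mathbf{0}/0=\mathbf{0}$). Then for every $j\in[m]$, $\|\mathbf{y}_{\hat j}-\mathbf{y}^\star\|_2 \le \|\mathbf{y}_j-\mathbf{y}^\star\|_2 + 2U$. -/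
open scoped RealInnerProductSpace

/-- Norm version of the deterministic oracle inequality for pseudo-labeling. -/
theorem pseudo_label_norm_oracle_inequality {n m : ℕ} [NeZero m]
    (y : Fin m → EuclideanSpace ℝ (Fin n)) (ystar ytil : EuclideanSpace ℝ (Fin n))
    (jhat : Fin m) (hmin : ∀ j : Fin m, ‖y jhat - ytil‖ ^ 2 ≤ ‖y j - ytil‖ ^ 2)
    (U : ℝ)
    (hU : U = ⨆ p : Fin m × Fin m,
      ⟪(‖y p.1 - y p.2‖⁻¹) • (y p.1 - y p.2), ytil - ystar⟫)
    (j : Fin m) :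
    ‖y jhat - ystar‖ ≤ ‖y j - ystar‖ + 2 * U := by
  have hbdd : BddAbove (Set.range fun p : Fin m × Fin m =>
      ⟪(‖y p.1 - y p.2‖⁻¹) • (y p.1 - y p.2), ytil - ystar⟫) :=
    Set.Finite.bddAbove (Set.finite_range _)
  have hU0 : 0 ≤ U := by
    have := le_ciSup hbdd (j, j)
    rw [hU]
    simpa using this
  set w := ytil - ystar with hw
  have key : ⟪y jhat - y j, w⟫ ≤ ‖y jhat - y j‖ * U := by
    by_cases h : y jhat - y j = 0
    · simp [h]
    · have h1 : ⟪(‖y jhat - y j‖⁻¹) • (y jhat - y j), w⟫ ≤ U := by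
        rw [hU]; exact le_ciSup hbdd (jhat, j)
      have hn : ‖y jhat - y j‖ ≠ 0 := norm_ne_zero_iff.mpr h
      have h2 : ⟪(‖y jhat - y j‖⁻¹) • (y jhat - y j), w⟫
          = ‖y jhat - y j‖⁻¹ * ⟪y jhat - y j, w⟫ := real_inner_smul_left _ _ _
      have h3 := mul_le_mul_of_nonneg_left h1 (norm_nonneg (y jhat - y j))
      rw [h2, ← mul_assoc, mul_inv_cancel₀ hn, one_mul] at h3
      exact h3
  have hexp : ∀ v : EuclideanSpace ℝ (Fin n),
      ‖v - ytil‖ ^ 2 = ‖v - ystar‖ ^ 2 - 2 * ⟪v - ystar, w⟫ + ‖w‖ ^ 2 := by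
    intro v
    have : v - ytil = (v - ystar) - w := by rw [hw]; abel
    rw [this, norm_sub_sq_real]
  have hmain := hmin j
  rw [hexp (y jhat), hexp (y j)] at hmain
  have hab : y jhat - y j = (y jhat - ystar) - (y j - ystar) := by abel
  have hsub : ⟪y jhat - ystar, w⟫ - ⟪y j - ystar, w⟫ = ⟪y jhat - y j, w⟫ := by
    rw [hab]; simp [inner_sub_left]
  have hkey2 : ‖y jhat - ystar‖ ^ 2 ≤ ‖y j - ystar‖ ^ 2
      + 2 * (‖y jhat - ystar‖ + ‖y j - ystar‖) * U := by
    have htri : ‖y jhat - y j‖ ≤ ‖y jhat - ystar‖ + ‖y j - ystar‖ := by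
      rw [hab]; exact norm_sub_le _ _
    nlinarith [mul_le_mul_of_nonneg_right htri hU0]
  nlinarith [norm_nonneg (y jhat - ystar), norm_nonneg (y j - ystar),
    sq_nonneg (‖y jhat - ystar‖ - ‖y j - ystar‖ - 2 * U)]
end

section
/- Let $\Sigma_0, \Sigma$ be positive semi-definite self-adjoint trace-class operators on a separable Hilbert space with $\Sigma_0 \preceq B\Sigma$ for some $B\ge 1$, and let $\lambda>0$. Then $\|(\Sigma+\lambda I)^{-1/2}\Sigma_0(\Sigma+\lambda I)^{-1/2}\| \le B$ and $\mathrm{Tr}[(\Sigma+\lambda I)^{-1/2}\Sigma_0(\Sigma+\lambda I)^{-1/2}] \le \sum_{j=1}^\infty \frac{B\mu_j}{\mu_j + B\lambda}$, where $\{\mu_j\}$ are the eigenvalues of $\Sigma_0$ in descending order. -/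
open scoped RealInnerProductSpace

/-- Cauchy–Schwarz inequality for the positive semidefinite bilinear form
`(x, y) ↦ ⟪T x, y⟫` associated to a positive self-adjoint operator `T`. -/
lemma aux_cs_psd {H : Type*} [NormedAddCommGroup H] [InnerProductSpace ℝ H]
    [CompleteSpace H] (T : H →L[ℝ] H) (hT : IsSelfAdjoint T)
    (hpos : ∀ u : H, 0 ≤ ⟪T u, u⟫) (x y : H) :
    ⟪T x, y⟫ ^ 2 ≤ ⟪T x, x⟫ * ⟪T y, y⟫ := by
  have hsym : ∀ a b : H, ⟪T a, b⟫ = ⟪a, T b⟫ := fun a b => hT.isSymmetric a b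
  have key : ∀ t : ℝ, 0 ≤ ⟪T y, y⟫ * (t * t) + (2 * ⟪T x, y⟫) * t + ⟪T x, x⟫ := by
    intro t
    have h := hpos (x + t • y)
    have expand : ⟪T (x + t • y), x + t • y⟫
        = ⟪T x, x⟫ + t * ⟪T x, y⟫ + t * ⟪T y, x⟫ + t * t * ⟪T y, y⟫ := by
      simp only [map_add, map_smul, inner_add_left, inner_add_right,
        real_inner_smul_left, real_inner_smul_right]
      ring
    have hxy : ⟪T y, x⟫ = ⟪T x, y⟫ := by
      rw [hsym y x, real_inner_comm]
    rw [expand, hxy] at h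
    nlinarith [h]
  have hdisc := discrim_le_zero key
  rw [discrim] at hdisc
  nlinarith [hdisc]

set_option maxHeartbeats 2000000 in
/-- If `Σ₀ ⪯ B Σ` with `B ≥ 1`, then the whitened operator
`(Σ+lam I)^{-1/2} Σ₀ (Σ+lam I)^{-1/2}` has operator norm at most `B`, and its
trace (computed along a Hilbert basis diagonalizing `Σ₀` with eigenvalues `μ`)
is at most `∑ⱼ B μⱼ/(μⱼ + B lam)`.  Here `R` denotes the positive self-adjoint
operator with `R (Σ + lam I) R = 1`, i.e. `R = (Σ + lam I)^{-1/2}`. -/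
theorem whitened_covariate_shift_bounds {H : Type*} [NormedAddCommGroup H]
    [InnerProductSpace ℝ H] [CompleteSpace H]
    (S₀ S : H →L[ℝ] H) (B lam : ℝ) (hB : 1 ≤ B) (hlam : 0 < lam)
    (hS₀sa : IsSelfAdjoint S₀) (hSsa : IsSelfAdjoint S)
    (hS₀pos : ∀ u : H, 0 ≤ ⟪S₀ u, u⟫) (hSpos : ∀ u : H, 0 ≤ ⟪S u, u⟫)
    (hdom : ∀ u : H, ⟪S₀ u, u⟫ ≤ B * ⟪S u, u⟫)
    (μ : ℕ → ℝ) (e : HilbertBasis ℕ ℝ H)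
    (heig : ∀ j, S₀ (e j) = μ j • e j)
    (hμnonneg : ∀ j, 0 ≤ μ j) (hμmono : Antitone μ) (hμsum : Summable μ)
    (R : H →L[ℝ] H)
    (hRsa : IsSelfAdjoint R) (hRpos : ∀ u : H, 0 ≤ ⟪R u, u⟫)
    (hR : R * (S + lam • (1 : H →L[ℝ] H)) * R = 1)
    (hsum : Summable fun j => ⟪(R * S₀ * R) (e j), e j⟫) :
    ‖R * S₀ * R‖ ≤ B ∧
      ∑' j, ⟪(R * S₀ * R) (e j), e j⟫ ≤ ∑' j, B * μ j / (μ j + B * lam) := by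
  have hB0 : (0:ℝ) < B := lt_of_lt_of_le one_pos hB
  have hRsym : ∀ a b : H, ⟪R a, b⟫ = ⟪a, R b⟫ := fun a b => hRsa.isSymmetric a b
  have hS₀sym : ∀ a b : H, ⟪S₀ a, b⟫ = ⟪a, S₀ b⟫ := fun a b => hS₀sa.isSymmetric a b
  -- the basic identity coming from `R (S + lam) R = 1`
  have hRAR : ∀ u : H, ⟪S (R u), R u⟫ + lam * ⟪R u, R u⟫ = ⟪u, u⟫ := by
    intro u
    have h := congrArg (fun (A : H →L[ℝ] H) => ⟪A u, u⟫) hR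
    simp only [ContinuousLinearMap.mul_apply, ContinuousLinearMap.add_apply,
      ContinuousLinearMap.smul_apply, ContinuousLinearMap.one_apply] at h
    rw [hRsym] at h
    simpa [inner_add_left, real_inner_smul_left, hRsym] using h
  set T : H →L[ℝ] H := R * S₀ * R with hTdef
  have hTapp : ∀ u : H, ⟪T u, u⟫ = ⟪S₀ (R u), R u⟫ := by
    intro u
    simp only [hTdef, ContinuousLinearMap.mul_apply]
    rw [hRsym]
  have hTpos : ∀ u : H, 0 ≤ ⟪T u, u⟫ := fun u => (hTapp u) ▸ hS₀pos (R u)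
  have hTquad : ∀ u : H, ⟪T u, u⟫ ≤ B * ⟪u, u⟫ := by
    intro u
    rw [hTapp u, ← hRAR u]
    have h1 := hdom (R u)
    have h2 : 0 ≤ ⟪R u, R u⟫ := real_inner_self_nonneg
    nlinarith [mul_nonneg (mul_nonneg hB0.le hlam.le) h2]
  have hTsa : IsSelfAdjoint T := by
    have h := hS₀sa.conj_adjoint R
    rw [hRsa.adjoint_eq] at h
    exact h
  have hTsym : ∀ a b : H, ⟪T a, b⟫ = ⟪a, T b⟫ := fun a b => hTsa.isSymmetric a b
  -- Part 1: operator norm bound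
  have norm_bound : ‖T‖ ≤ B := by
    apply ContinuousLinearMap.opNorm_le_bound _ (le_of_lt hB0)
    intro x
    have hcs := aux_cs_psd T hTsa hTpos x (T x)
    have h1 : ⟪T x, T x⟫ = ‖T x‖ ^ 2 := real_inner_self_eq_norm_sq (T x)
    have h2 : ⟪T x, x⟫ ≤ B * ‖x‖ ^ 2 := by
      have := hTquad x
      rwa [real_inner_self_eq_norm_sq] at this
    have h3 : ⟪T (T x), T x⟫ ≤ B * ‖T x‖ ^ 2 := by
      have := hTquad (T x)
      rwa [real_inner_self_eq_norm_sq] at this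
    have h4 : (0:ℝ) ≤ ⟪T x, x⟫ := hTpos x
    have h5 : (0:ℝ) ≤ ⟪T (T x), T x⟫ := hTpos (T x)
    have h6 : ‖T x‖ ^ 4 ≤ (B * ‖x‖ ^ 2) * (B * ‖T x‖ ^ 2) := by
      calc ‖T x‖ ^ 4 = (‖T x‖ ^ 2) ^ 2 := by ring
        _ = ⟪T x, T x⟫ ^ 2 := by rw [h1]
        _ ≤ ⟪T x, x⟫ * ⟪T (T x), T x⟫ := hcs
        _ ≤ (B * ‖x‖ ^ 2) * (B * ‖T x‖ ^ 2) := by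
            apply mul_le_mul h2 h3 h5
            positivity
    have hTx : (0:ℝ) ≤ ‖T x‖ := norm_nonneg _
    have hx : (0:ℝ) ≤ ‖x‖ := norm_nonneg _
    have hb : (0:ℝ) ≤ B * ‖x‖ := mul_nonneg hB0.le hx
    rcases eq_or_lt_of_le hTx with h0 | h0
    · rw [← h0]; exact hb
    · have hsq : ‖T x‖ ^ 2 ≤ (B * ‖x‖) ^ 2 := by nlinarith [mul_pos h0 h0]
      nlinarith [hsq]
  refine ⟨norm_bound, ?_⟩
  -- Part 2: trace bound
  -- `t k = ⟪R² e k, e k⟫ = ‖R e k‖²`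
  set t : ℕ → ℝ := fun k => ⟪R (R (e k)), e k⟫ with htdef
  have ht_eq : ∀ k, t k = ⟪R (e k), R (e k)⟫ := by
    intro k; rw [htdef]; exact (hRsym (R (e k)) (e k)).trans (real_inner_comm _ _) |>.trans rfl
  have ht_nonneg : ∀ k, 0 ≤ t k := fun k => (ht_eq k) ▸ real_inner_self_nonneg
  -- the comparison operator `D = B⁻¹ S₀ + lam`
  set D : H →L[ℝ] H := B⁻¹ • S₀ + lam • (1 : H →L[ℝ] H) with hDdef
  have hDapp : ∀ u : H, D u = B⁻¹ • S₀ u + lam • u := by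
    intro u
    rw [hDdef]
    rfl
  have hDsa : IsSelfAdjoint D := by
    rw [ContinuousLinearMap.isSelfAdjoint_iff_isSymmetric]
    intro x y
    show ⟪D x, y⟫ = ⟪x, D y⟫
    rw [hDapp, hDapp]
    simp only [inner_add_left, inner_add_right, real_inner_smul_left, real_inner_smul_right]
    rw [hS₀sym]
  have hDinner : ∀ u v : H, ⟪D u, v⟫ = B⁻¹ * ⟪S₀ u, v⟫ + lam * ⟪u, v⟫ := by
    intro u v; rw [hDapp]; simp [inner_add_left, real_inner_smul_left]
  have hDpos : ∀ u : H, 0 ≤ ⟪D u, u⟫ := by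
    intro u
    rw [hDinner]
    have := hS₀pos u
    have h2 : (0:ℝ) ≤ ⟪u, u⟫ := real_inner_self_nonneg
    have : (0:ℝ) ≤ B⁻¹ * ⟪S₀ u, u⟫ := mul_nonneg (by positivity) (hS₀pos u)
    nlinarith
  set c : ℕ → ℝ := fun k => B⁻¹ * μ k + lam with hcdef
  have hc_pos : ∀ k, 0 < c k := by
    intro k
    have : (0:ℝ) ≤ B⁻¹ * μ k := mul_nonneg (by positivity) (hμnonneg k)
    simp only [hcdef]; linarith
  have hek_norm : ∀ k, ⟪(e k : H), e k⟫ = 1 := by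
    intro k
    have := e.orthonormal.1 k
    rw [real_inner_self_eq_norm_sq, this, one_pow]
  have hDe : ∀ (k : ℕ) (v : H), ⟪D v, e k⟫ = c k * ⟪v, e k⟫ := by
    intro k v
    rw [hDinner, hS₀sym, heig k, real_inner_smul_right]
    simp only [hcdef]
    ring
  -- per-term bound `t k ≤ 1 / c k`
  have ht_le : ∀ k, t k ≤ 1 / c k := by
    intro k
    have hck := hc_pos k
    set v : H := R (R (e k)) with hvdef
    have h1 : ⟪D v, e k⟫ = c k * t k := hDe k v
    have h2 : ⟪D (e k), e k⟫ = c k := by rw [hDe k (e k), hek_norm, mul_one]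
    have hcs := aux_cs_psd D hDsa hDpos v (e k)
    have h3 : ⟪D v, v⟫ ≤ t k := by
      rw [hDinner]
      have hd := hdom v
      have hB' : B⁻¹ * ⟪S₀ v, v⟫ ≤ ⟪S v, v⟫ := by
        rw [inv_mul_le_iff₀ hB0]; linarith [hdom v]
      have hAv : ⟪S v, v⟫ + lam * ⟪v, v⟫ = t k := by
        have := hRAR (R (e k))
        rw [← hvdef] at this
        rw [this, ht_eq k]
      nlinarith
    rw [h1, h2] at hcs
    have htk := ht_nonneg k
    -- (c t)² ≤ (D v, v) * c ≤ t * c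
    have h4 : (c k * t k) ^ 2 ≤ t k * c k := by
      calc (c k * t k) ^ 2 ≤ ⟪D v, v⟫ * c k := hcs
        _ ≤ t k * c k := by nlinarith
    rw [le_div_iff₀ hck]
    nlinarith
  have hterm : ∀ k, μ k * t k ≤ B * μ k / (μ k + B * lam) := by
    intro k
    have h1 : μ k * t k ≤ μ k * (1 / c k) :=
      mul_le_mul_of_nonneg_left (ht_le k) (hμnonneg k)
    have h2 : μ k * (1 / c k) = B * μ k / (μ k + B * lam) := by
      have hd : (0:ℝ) < μ k + B * lam := by
        have := hμnonneg k; nlinarith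
      have hBne : B ≠ 0 := hB0.ne'
      rw [mul_one_div, div_eq_div_iff (hc_pos k).ne' hd.ne']
      simp only [hcdef]
      field_simp
    linarith [h1, h2.le, h2.ge]
  -- summability of the right-hand side
  have hrhs_le : ∀ k, B * μ k / (μ k + B * lam) ≤ (1 / lam) * μ k := by
    intro k
    have hμk := hμnonneg k
    have hd : (0:ℝ) < μ k + B * lam := by nlinarith
    rw [div_le_iff₀ hd]
    have : B * lam ≤ μ k + B * lam := by linarith
    have h1 : B * μ k = (1/lam) * μ k * (B * lam) := by field_simp
    rw [h1]
    apply mul_le_mul_of_nonneg_left this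
    positivity
  have hrhs_nonneg : ∀ k, 0 ≤ B * μ k / (μ k + B * lam) := by
    intro k
    have hμk := hμnonneg k
    have hd : (0:ℝ) < μ k + B * lam := by nlinarith
    positivity
  have hrhs_summable : Summable (fun k => B * μ k / (μ k + B * lam)) :=
    Summable.of_nonneg_of_le hrhs_nonneg hrhs_le (hμsum.mul_left (1/lam))
  -- `g k = μ k * t k` is summable
  have hg_nonneg : ∀ k, 0 ≤ μ k * t k := fun k => mul_nonneg (hμnonneg k) (ht_nonneg k)
  have hg_summable : Summable (fun k => μ k * t k) :=
    Summable.of_nonneg_of_le hg_nonneg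
      (fun k => (hterm k).trans (hrhs_le k)) (hμsum.mul_left (1/lam))
  -- diagonal expansion of S₀'s quadratic form
  have hFsummable : ∀ x : H, Summable (fun k => μ k * ⟪x, e k⟫ ^ 2) := by
    intro x
    have hsq : ∀ k : ℕ, ⟪x, e k⟫ ^ 2 = ⟪x, e k⟫ * ⟪(e k : H), x⟫ := by
      intro k; rw [sq, real_inner_comm (e k : H) x]
    apply Summable.of_nonneg_of_le
      (fun k => mul_nonneg (hμnonneg k) (sq_nonneg _))
      (fun k => ?_) ((e.summable_inner_mul_inner x x).mul_left (μ 0))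
    have h1 : μ k ≤ μ 0 := hμmono (Nat.zero_le k)
    have h2 : (0:ℝ) ≤ ⟪x, e k⟫ ^ 2 := sq_nonneg _
    rw [hsq k] at h2 ⊢
    exact mul_le_mul_of_nonneg_right h1 h2
  have hFtsum : ∀ x : H, ∑' k, μ k * ⟪x, e k⟫ ^ 2 = ⟪S₀ x, x⟫ := by
    intro x
    have h := e.tsum_inner_mul_inner x (S₀ x)
    have heq : ∀ k : ℕ, ⟪x, e k⟫ * ⟪(e k : H), S₀ x⟫ = μ k * ⟪x, e k⟫ ^ 2 := by
      intro k
      rw [← hS₀sym (e k) x, heig k, real_inner_smul_left, real_inner_comm (e k) x]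
      ring
    rw [← tsum_congr heq, h, real_inner_comm]
  -- `f j` expansion
  have hf_eq : ∀ j, ⟪T (e j), e j⟫ = ∑' k, μ k * ⟪R (e j), e k⟫ ^ 2 := by
    intro j
    rw [hTapp, ← hFtsum (R (e j))]
  -- `g k` expansion : `μ k * t k = ∑' j, μ k * ⟪R (e j), e k⟫ ^ 2`
  have hg_inner_summable : ∀ k, Summable (fun j : ℕ => μ k * ⟪R (e j), e k⟫ ^ 2) := by
    intro k
    apply Summable.mul_left
    have h := e.summable_inner_mul_inner (R (e k)) (R (e k))
    apply h.congr
    intro j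
    rw [hRsym (e j) (e k), sq, real_inner_comm (R (e k)) (e j)]
  have hg_eq : ∀ k, μ k * t k = ∑' j, μ k * ⟪R (e j), e k⟫ ^ 2 := by
    intro k
    rw [tsum_mul_left]
    congr 1
    have h := e.tsum_inner_mul_inner (R (e k)) (R (e k))
    rw [ht_eq k, ← h]
    apply tsum_congr
    intro j
    rw [hRsym (e j) (e k), sq, real_inner_comm (R (e k)) (e j)]
  -- swap the double sum using `ℝ≥0∞`
  have key : ∑' j, ⟪T (e j), e j⟫ = ∑' k, μ k * t k := by
    have hf_nonneg : ∀ j, 0 ≤ ⟪T (e j), e j⟫ := fun j => hTpos (e j)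
    have hswap : (∑' j, ∑' k, ENNReal.ofReal (μ k * ⟪R (e j), e k⟫ ^ 2))
        = ∑' k, ∑' j, ENNReal.ofReal (μ k * ⟪R (e j), e k⟫ ^ 2) := ENNReal.tsum_comm
    have hL : ENNReal.ofReal (∑' j, ⟪T (e j), e j⟫)
        = ∑' j, ∑' k, ENNReal.ofReal (μ k * ⟪R (e j), e k⟫ ^ 2) := by
      rw [ENNReal.ofReal_tsum_of_nonneg hf_nonneg hsum]
      apply tsum_congr
      intro j
      rw [hf_eq j]
      exact ENNReal.ofReal_tsum_of_nonneg
        (fun k => mul_nonneg (hμnonneg k) (sq_nonneg _)) (hFsummable (R (e j)))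
    have hRt : ENNReal.ofReal (∑' k, μ k * t k)
        = ∑' k, ∑' j, ENNReal.ofReal (μ k * ⟪R (e j), e k⟫ ^ 2) := by
      rw [ENNReal.ofReal_tsum_of_nonneg hg_nonneg hg_summable]
      apply tsum_congr
      intro k
      rw [hg_eq k]
      exact ENNReal.ofReal_tsum_of_nonneg
        (fun j => mul_nonneg (hμnonneg k) (sq_nonneg _)) (hg_inner_summable k)
    have := hL.trans (hswap.trans hRt.symm)
    rwa [ENNReal.ofReal_eq_ofReal_iff (tsum_nonneg hf_nonneg)
      (tsum_nonneg hg_nonneg)] at this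
  rw [key]
  exact Summable.tsum_le_tsum hterm hg_summable hrhs_summable
end
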